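/- Let K be the field of fractions of ℚ[x₀,x₁,x₂,x₃,x₄,x₅], set A = (x₂x₄+x₃x₅)/(x₀x₁), B = (x₁x₄+x₀x₅)/(x₂x₃), C = (x₀x₂+x₁x₃)/(x₄x₅), and let τ'₁, τ'₂, τ'₃ be the maps on K⁶ defined by: τ'₁ replaces (v₀,v₁) by ((v₂v₄+v₃v₅)/v₁, (v₂v₄+v₃v₅)/v₀); τ'₂ replaces (v₂,v₃) by ((v₁v₄+v₀v₅)/v₃, (v₁v₄+v₀v₅)/v₂); τ'₃ replaces (v₄,v₅) by ((v₀v₂+v₁v₃)/v₅, (v₀v₂+v₁v₃)/v₄); each fixes the remaining entries. For natural numbers s, t, let w be the word consisting of the block (1,2,3) repeated 2t times followed by the block (2,1,3) repeated 2s+1 times, and let v be the result of applying the maps to X = (x₀,…,x₅) in left-to-right order along w. Then v₀ = x₀·A^{3s²+3st+3t²+3s+3t+1}·B^{3s²+3st+3t²+4s+2t+1}·C^{3s²+3st+3t²+2s+t} and v₁ = x₁ times the same monomial in A, B, C. -/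

import Mathlib

noncomputable section

/-- The polynomial ring ℚ[x₀,…,x₅]. -/
abbrev P : Type := MvPolynomial (Fin 6) ℚ

/-- K = Frac(ℚ[x₀,…,x₅]). -/
abbrev K : Type := FractionRing P

/-- The images of the variables x₀,…,x₅ in K. -/
def x (i : Fin 6) : K := algebraMap P K (MvPolynomial.X i)

/-- τ'₁ : replaces (v₀, v₁) by ((v₂v₄+v₃v₅)/v₁, (v₂v₄+v₃v₅)/v₀). -/
def tau1 (v : Fin 6 → K) : Fin 6 → K := fun k =>
  if k = 0 then (v 2 * v 4 + v 3 * v 5) / v 1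
  else if k = 1 then (v 2 * v 4 + v 3 * v 5) / v 0
  else v k

/-- τ'₂ : replaces (v₂, v₃) by ((v₁v₄+v₀v₅)/v₃, (v₁v₄+v₀v₅)/v₂). -/
def tau2 (v : Fin 6 → K) : Fin 6 → K := fun k =>
  if k = 2 then (v 1 * v 4 + v 0 * v 5) / v 3
  else if k = 3 then (v 1 * v 4 + v 0 * v 5) / v 2
  else v k

/-- τ'₃ : replaces (v₄, v₅) by ((v₀v₂+v₁v₃)/v₅, (v₀v₂+v₁v₃)/v₄). -/
def tau3 (v : Fin 6 → K) : Fin 6 → K := fun k =>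
  if k = 4 then (v 0 * v 2 + v 1 * v 3) / v 5
  else if k = 5 then (v 0 * v 2 + v 1 * v 3) / v 4
  else v k

/-- τ' indexed by Fin 3: `tau i` is τ'_{i+1}. -/
def tau : Fin 3 → (Fin 6 → K) → (Fin 6 → K)
  | 0 => tau1
  | 1 => tau2
  | 2 => tau3

/-- The initial labeled seed X = (x₀,…,x₅). -/
def X0 : Fin 6 → K := x

/-- Apply the maps τ'₍a₁₎, …, τ'₍aₙ₎ along the word `w` in left-to-right order. -/
def applyWord (w : List (Fin 3)) (v : Fin 6 → K) : Fin 6 → K :=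
  w.foldl (fun u a => tau a u) v

/-- A = (x₂x₄+x₃x₅)/(x₀x₁). -/
def A : K := (x 2 * x 4 + x 3 * x 5) / (x 0 * x 1)

/-- B = (x₁x₄+x₀x₅)/(x₂x₃). -/
def B : K := (x 1 * x 4 + x 0 * x 5) / (x 2 * x 3)

/-- C = (x₀x₂+x₁x₃)/(x₄x₅). -/
def C : K := (x 0 * x 2 + x 1 * x 3) / (x 4 * x 5)

/-- The canonical path (123)^{2t}(213)^{2s+1} to the odd alcove {3s+2, 3t-1}
(letters 1,2,3 are encoded as 0,1,2 in `Fin 3`). -/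
def word10 (s t : ℕ) : List (Fin 3) :=
  (List.replicate (2 * t) ([0, 1, 2] : List (Fin 3))).flatten ++
    (List.replicate (2 * s + 1) ([1, 0, 2] : List (Fin 3))).flatten

/-
Every seed reached from X along the path has the shape
(x₀·m₀, x₁·m₀, x₂·m₁, x₃·m₁, x₄·m₂, x₅·m₂) with m₀, m₁, m₂ Laurent monomials in A, B, C.
Indeed x₂x₄ + x₃x₅ = A·x₀x₁, so τ'₁ keeps this shape and acts on the exponent vectors by
p ↦ e_A + q + r − p (and cyclically for τ'₂, τ'₃). The theorem thus reduces to iterating an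
affine map on (ℤ³)³. After an even number of blocks the exponents are quadratic polynomials,
in t along (123)^{2t} and then in s along (213)^{2s+1}, so induction in steps of two blocks
gives the closed forms.
-/

lemma x_ne_zero (i : Fin 6) : x i ≠ 0 := by
  simp [x, MvPolynomial.X_ne_zero]

lemma binomial_ne_zero (i j k l : Fin 6) : x i * x j + x k * x l ≠ 0 := by
  intro h
  have : (MvPolynomial.X i * MvPolynomial.X j + MvPolynomial.X k * MvPolynomial.X l : P) = 0 := by
    apply IsFractionRing.injective P K
    simpa [x] using h
  simpa using congrArg (MvPolynomial.eval fun _ => (1 : ℚ)) this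

lemma A_ne_zero : A ≠ 0 :=
  div_ne_zero (binomial_ne_zero 2 4 3 5) (mul_ne_zero (x_ne_zero 0) (x_ne_zero 1))

lemma B_ne_zero : B ≠ 0 :=
  div_ne_zero (binomial_ne_zero 1 4 0 5) (mul_ne_zero (x_ne_zero 2) (x_ne_zero 3))

lemma C_ne_zero : C ≠ 0 :=
  div_ne_zero (binomial_ne_zero 0 2 1 3) (mul_ne_zero (x_ne_zero 4) (x_ne_zero 5))

lemma binomialA_eq : x 2 * x 4 + x 3 * x 5 = A * (x 0 * x 1) :=
  (div_mul_cancel₀ _ (mul_ne_zero (x_ne_zero 0) (x_ne_zero 1))).symm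

lemma binomialB_eq : x 1 * x 4 + x 0 * x 5 = B * (x 2 * x 3) :=
  (div_mul_cancel₀ _ (mul_ne_zero (x_ne_zero 2) (x_ne_zero 3))).symm

lemma binomialC_eq : x 0 * x 2 + x 1 * x 3 = C * (x 4 * x 5) :=
  (div_mul_cancel₀ _ (mul_ne_zero (x_ne_zero 4) (x_ne_zero 5))).symm

def monoABC (e : ℤ × ℤ × ℤ) : K := A ^ e.1 * B ^ e.2.1 * C ^ e.2.2

lemma monoABC_ne_zero (e : ℤ × ℤ × ℤ) : monoABC e ≠ 0 := by
  unfold monoABC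
  exact mul_ne_zero (mul_ne_zero (zpow_ne_zero _ A_ne_zero) (zpow_ne_zero _ B_ne_zero))
    (zpow_ne_zero _ C_ne_zero)

lemma monoABC_add (e f : ℤ × ℤ × ℤ) : monoABC (e + f) = monoABC e * monoABC f := by
  simp only [monoABC, Prod.fst_add, Prod.snd_add, zpow_add₀ A_ne_zero, zpow_add₀ B_ne_zero,
    zpow_add₀ C_ne_zero]
  ring

lemma monoABC_sub (e f : ℤ × ℤ × ℤ) : monoABC (e - f) = monoABC e / monoABC f := by
  rw [eq_div_iff (monoABC_ne_zero f), ← monoABC_add, sub_add_cancel]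

lemma monoABC_A : monoABC (1, 0, 0) = A := by simp [monoABC]
lemma monoABC_B : monoABC (0, 1, 0) = B := by simp [monoABC]
lemma monoABC_C : monoABC (0, 0, 1) = C := by simp [monoABC]

lemma exchange_div {F : Type*} [Field F] {a b c d y z M μ ν ρ : F} (hy : y ≠ 0) (hρ : ρ ≠ 0)
    (h : a * b + c * d = M * (y * z)) :
    (a * μ * (b * ν) + c * μ * (d * ν)) / (y * ρ) = z * (M * μ * ν / ρ) := by
  field_simp
  linear_combination μ * ν * h

def scaledSeed (p q r : ℤ × ℤ × ℤ) : Fin 6 → K :=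
  ![x 0 * monoABC p, x 1 * monoABC p, x 2 * monoABC q, x 3 * monoABC q,
    x 4 * monoABC r, x 5 * monoABC r]

lemma tau1_scaledSeed (p q r : ℤ × ℤ × ℤ) :
    tau1 (scaledSeed p q r) = scaledSeed ((1, 0, 0) + q + r - p) q r := by
  funext k
  fin_cases k <;> simp only [tau1, scaledSeed, Fin.zero_eta, Fin.mk_one, Fin.reduceFinMk,
    Fin.isValue, Fin.reduceEq, ↓reduceIte, Matrix.cons_val, Matrix.cons_val_zero,
    Matrix.cons_val_one, monoABC_add, monoABC_sub, monoABC_A]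
  · exact exchange_div (x_ne_zero 1) (monoABC_ne_zero p) (by linear_combination binomialA_eq)
  · exact exchange_div (x_ne_zero 0) (monoABC_ne_zero p) (by linear_combination binomialA_eq)

lemma tau2_scaledSeed (p q r : ℤ × ℤ × ℤ) :
    tau2 (scaledSeed p q r) = scaledSeed p ((0, 1, 0) + p + r - q) r := by
  funext k
  fin_cases k <;> simp only [tau2, scaledSeed, Fin.zero_eta, Fin.mk_one, Fin.reduceFinMk,
    Fin.isValue, Fin.reduceEq, ↓reduceIte, Matrix.cons_val, Matrix.cons_val_zero,
    Matrix.cons_val_one, monoABC_add, monoABC_sub, monoABC_B]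
  · exact exchange_div (x_ne_zero 3) (monoABC_ne_zero q) (by linear_combination binomialB_eq)
  · exact exchange_div (x_ne_zero 2) (monoABC_ne_zero q) (by linear_combination binomialB_eq)

lemma tau3_scaledSeed (p q r : ℤ × ℤ × ℤ) :
    tau3 (scaledSeed p q r) = scaledSeed p q ((0, 0, 1) + p + q - r) := by
  funext k
  fin_cases k <;> simp only [tau3, scaledSeed, Fin.zero_eta, Fin.mk_one, Fin.reduceFinMk,
    Fin.isValue, Fin.reduceEq, ↓reduceIte, Matrix.cons_val, Matrix.cons_val_zero,
    Matrix.cons_val_one, monoABC_add, monoABC_sub, monoABC_C]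
  · exact exchange_div (x_ne_zero 5) (monoABC_ne_zero r) (by linear_combination binomialC_eq)
  · exact exchange_div (x_ne_zero 4) (monoABC_ne_zero r) (by linear_combination binomialC_eq)

lemma X0_eq_scaledSeed : X0 = scaledSeed 0 0 0 := by
  funext k
  fin_cases k <;> simp [X0, scaledSeed, monoABC]

lemma applyWord_append (w w' : List (Fin 3)) (v : Fin 6 → K) :
    applyWord (w ++ w') v = applyWord w' (applyWord w v) :=
  List.foldl_append

lemma applyWord_flatten_replicate (n : ℕ) (w : List (Fin 3)) :
    applyWord (List.replicate n w).flatten = (applyWord w)^[n] := by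
  induction n with
  | zero => rfl
  | succ n ih =>
    funext v
    rw [List.replicate_succ, List.flatten_cons, applyWord_append, ih,
      Function.iterate_succ_apply]

lemma applyWord_012 (v : Fin 6 → K) : applyWord [0, 1, 2] v = tau3 (tau2 (tau1 v)) := rfl

lemma applyWord_102 (v : Fin 6 → K) : applyWord [1, 0, 2] v = tau3 (tau1 (tau2 v)) := rfl

lemma iterate_applyWord_012_X0 (t : ℕ) :
    (applyWord [0, 1, 2])^[2 * t] X0 =
      scaledSeed (3 * t ^ 2, 3 * t ^ 2 - t, 3 * t ^ 2 - 2 * t)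
        (3 * t ^ 2 + t, 3 * t ^ 2, 3 * t ^ 2 - t)
        (3 * t ^ 2 + 2 * t, 3 * t ^ 2 + t, 3 * t ^ 2) := by
  induction t with
  | zero => simpa [Prod.mk_zero_zero] using X0_eq_scaledSeed
  | succ t ih =>
    rw [show 2 * (t + 1) = 2 * t + 1 + 1 by ring, Function.iterate_succ_apply',
      Function.iterate_succ_apply', ih, applyWord_012, applyWord_012, tau1_scaledSeed,
      tau2_scaledSeed, tau3_scaledSeed, tau1_scaledSeed, tau2_scaledSeed, tau3_scaledSeed]
    congr 1 <;> ext <;> push_cast [Prod.mk_add_mk, Prod.mk_sub_mk] <;> ring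

lemma iterate_applyWord_102_scaledSeed (s t : ℕ) :
    (applyWord [1, 0, 2])^[2 * s + 1]
        (scaledSeed (3 * t ^ 2, 3 * t ^ 2 - t, 3 * t ^ 2 - 2 * t)
          (3 * t ^ 2 + t, 3 * t ^ 2, 3 * t ^ 2 - t)
          (3 * t ^ 2 + 2 * t, 3 * t ^ 2 + t, 3 * t ^ 2)) =
      scaledSeed (3 * s ^ 2 + 3 * s * t + 3 * t ^ 2 + 3 * s + 3 * t + 1,
          3 * s ^ 2 + 3 * s * t + 3 * t ^ 2 + 4 * s + 2 * t + 1,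
          3 * s ^ 2 + 3 * s * t + 3 * t ^ 2 + 2 * s + t)
        (3 * s ^ 2 + 3 * s * t + 3 * t ^ 2 + 2 * s + t,
          3 * s ^ 2 + 3 * s * t + 3 * t ^ 2 + 3 * s + 1,
          3 * s ^ 2 + 3 * s * t + 3 * t ^ 2 + s - t)
        (3 * s ^ 2 + 3 * s * t + 3 * t ^ 2 + 4 * s + 2 * t + 1,
          3 * s ^ 2 + 3 * s * t + 3 * t ^ 2 + 5 * s + t + 2,
          3 * s ^ 2 + 3 * s * t + 3 * t ^ 2 + 3 * s + 1) := by
  induction s with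
  | zero =>
    rw [Nat.mul_zero, Nat.zero_add, Function.iterate_one, applyWord_102, tau2_scaledSeed,
      tau1_scaledSeed, tau3_scaledSeed]
    congr 1 <;> ext <;> push_cast [Prod.mk_add_mk, Prod.mk_sub_mk] <;> ring
  | succ s ih =>
    rw [show 2 * (s + 1) + 1 = 2 * s + 1 + 1 + 1 by ring, Function.iterate_succ_apply',
      Function.iterate_succ_apply', ih, applyWord_102, applyWord_102, tau2_scaledSeed,
      tau1_scaledSeed, tau3_scaledSeed, tau2_scaledSeed, tau1_scaledSeed, tau3_scaledSeed]
    congr 1 <;> ext <;> push_cast [Prod.mk_add_mk, Prod.mk_sub_mk] <;> ring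

/-- Theorem 2.1, odd-alcove case |i| ≡ 3 mod 6, |j| ≡ 0 mod 3, i = 6s+3, j = 3t:
the vertex-0 and vertex-1 cluster variables at the corresponding odd alcove. -/
theorem alcove_odd_30 (s t : ℕ) :
    applyWord (word10 s t) X0 0 =
      x 0 * A ^ (3 * (s : ℤ) ^ 2 + 3 * s * t + 3 * t ^ 2 + 3 * s + 3 * t + 1)
          * B ^ (3 * (s : ℤ) ^ 2 + 3 * s * t + 3 * t ^ 2 + 4 * s + 2 * t + 1)
          * C ^ (3 * (s : ℤ) ^ 2 + 3 * s * t + 3 * t ^ 2 + 2 * s + t) ∧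
    applyWord (word10 s t) X0 1 =
      x 1 * A ^ (3 * (s : ℤ) ^ 2 + 3 * s * t + 3 * t ^ 2 + 3 * s + 3 * t + 1)
          * B ^ (3 * (s : ℤ) ^ 2 + 3 * s * t + 3 * t ^ 2 + 4 * s + 2 * t + 1)
          * C ^ (3 * (s : ℤ) ^ 2 + 3 * s * t + 3 * t ^ 2 + 2 * s + t) := by
  rw [word10, applyWord_append, applyWord_flatten_replicate, applyWord_flatten_replicate,
    iterate_applyWord_012_X0, iterate_applyWord_102_scaledSeed]
  constructor <;> simp [scaledSeed, monoABC, mul_assoc]
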